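/- arXiv:1712.10266 — 5 statements merged into one kernel-verified Lean document; each statement's English description precedes it below -/
import Mathlib

section
/- Fix α > 0 and 0 < β < 1. Let M(D) = q(D) + η with η ∼ Laplace(b), b = α/ln(1/β). Define the post-processed mechanism M'(D) that outputs True if M(D) > c and False otherwise. Then M' satisfies (α', β)-LCC tolerance with α' = (1 − ln 2 / ln(1/β))·α; i.e., P(M'(D) = True | q(D) < c − α') ≤ β and P(M'(D) = False | q(D) > c + α') ≤ β. Moreover α' < α. -/
open MeasureTheory

/-- The Laplace distribution with scale `b`. -/
noncomputable def laplace (b : ℝ) : Measure ℝ :=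
  volume.withDensity fun z => ENNReal.ofReal ((1 / (2 * b)) * Real.exp (-|z| / b))

/-!
The tail of `Laplace(b)` beyond `t ≥ 0` is `exp (-t / b) / 2`. For `b = α / ln(1/β)` the exponent at
`t = α'` is `ln 2 - ln(1/β)`, so the tail beyond `α'` is exactly `β`. A false `True` is the event
`η > c - q(D)`, contained in the tail beyond `α'`; a false `False` is `η ≤ c - q(D)`, contained in
the lower tail below `-α'`, which has the same mass by symmetry of the density.
-/

open Set Real

theorem laplace_Ioi {b t : ℝ} (hb : 0 < b) (ht : 0 ≤ t) :
    laplace b (Ioi t) = ENNReal.ofReal (exp (-t / b) / 2) := by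
  have hrate : -b⁻¹ < 0 := neg_lt_zero.mpr (inv_pos.mpr hb)
  have hdensity : EqOn (fun z => 1 / (2 * b) * exp (-|z| / b))
      (fun z => 1 / (2 * b) * exp (-b⁻¹ * z)) (Ioi t) := fun z hz => by
    dsimp only
    rw [abs_of_nonneg (ht.trans hz.le)]
    ring_nf
  have hint : IntegrableOn (fun z => 1 / (2 * b) * exp (-b⁻¹ * z)) (Ioi t) :=
    (integrableOn_exp_mul_Ioi hrate t).const_mul _
  rw [laplace, withDensity_apply _ measurableSet_Ioi, setLIntegral_congr_fun measurableSet_Ioi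
    (fun z hz => congrArg ENNReal.ofReal (hdensity hz)),
    ← ofReal_integral_eq_lintegral_ofReal hint (ae_of_all _ fun z => by positivity),
    integral_const_mul, integral_exp_mul_Ioi hrate]
  congr 1
  field_simp

theorem laplace_absolutelyContinuous (b : ℝ) : laplace b ≪ volume :=
  withDensity_absolutelyContinuous _ _

theorem laplace_Iic_neg (b t : ℝ) : laplace b (Iic (-t)) = laplace b (Ioi t) := by
  have hmeas : Measurable fun z : ℝ => ENNReal.ofReal ((1 / (2 * b)) * exp (-|z| / b)) := by
    fun_prop
  have hreflect : laplace b (Iic (-t)) = laplace b (Ici t) := by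
    rw [laplace, withDensity_apply _ measurableSet_Iic, withDensity_apply _ measurableSet_Ici]
    conv_rhs => rw [← Measure.map_neg_eq_self (volume : Measure ℝ),
      setLIntegral_map measurableSet_Ici hmeas measurable_neg]
    rw [neg_preimage, neg_Ici]
    simp only [abs_neg]
  rw [hreflect, measure_congr ((laplace_absolutelyContinuous b).ae_eq Ioi_ae_eq_Ici.symm)]

theorem laplace_Ioi_tolerance {α β : ℝ} (hα : 0 < α) (hβ0 : 0 < β) (hβ : β ≤ 1 / 2) :
    laplace (α / log (1 / β)) (Ioi ((1 - log 2 / log (1 / β)) * α)) = ENNReal.ofReal β := by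
  have hlog : log 2 ≤ log (1 / β) :=
    log_le_log two_pos (by rw [le_div_iff₀ hβ0]; linarith)
  have hL : 0 < log (1 / β) := (log_pos one_lt_two).trans_le hlog
  have hα' : 0 ≤ (1 - log 2 / log (1 / β)) * α :=
    mul_nonneg (sub_nonneg.mpr ((div_le_one hL).mpr hlog)) hα.le
  have hexponent : -((1 - log 2 / log (1 / β)) * α) / (α / log (1 / β)) = log 2 - log (1 / β) := by
    field_simp
    ring
  rw [laplace_Ioi (div_pos hα hL) hα', hexponent, exp_sub, exp_log two_pos,
    exp_log (one_div_pos.mpr hβ0)]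
  congr 1
  field_simp

/-- Thresholding the output of the Laplace mechanism with scale `α / ln(1/β)`
answers the comparison query with `(α', β)`-LCC tolerance, where
`α' = (1 − ln 2 / ln(1/β)) · α < α`. -/
theorem postprocessed_laplace_lcc_tolerance {D : Type} (q : D → ℝ) (c α β : ℝ)
    (hα : 0 < α) (hβ0 : 0 < β) (hβ : β < 1 / 2) :
    (∀ d : D,
      (q d < c - (1 - Real.log 2 / Real.log (1 / β)) * α →
        laplace (α / Real.log (1 / β)) {z : ℝ | c < q d + z} ≤ ENNReal.ofReal β) ∧
      (c + (1 - Real.log 2 / Real.log (1 / β)) * α < q d →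
        laplace (α / Real.log (1 / β)) {z : ℝ | ¬ c < q d + z} ≤ ENNReal.ofReal β)) ∧
    (1 - Real.log 2 / Real.log (1 / β)) * α < α := by
  set α' := (1 - log 2 / log (1 / β)) * α
  have htail := laplace_Ioi_tolerance hα hβ0 hβ.le
  refine ⟨fun d => ⟨fun hd => ?_, fun hd => ?_⟩, ?_⟩
  · calc laplace _ {z | c < q d + z} = laplace _ (Ioi (c - q d)) := by
          congr 1; ext z; simp only [mem_ofPred_eq, mem_Ioi, sub_lt_iff_lt_add']
      _ ≤ laplace _ (Ioi α') := measure_mono (Ioi_subset_Ioi (by linarith))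
      _ = ENNReal.ofReal β := htail
  · calc laplace _ {z | ¬ c < q d + z} = laplace _ (Iic (c - q d)) := by
          congr 1; ext z; simp only [mem_ofPred_eq, mem_Iic, not_lt, le_sub_iff_add_le']
      _ ≤ laplace _ (Iic (-α')) := measure_mono (Iic_subset_Iic.mpr (by linarith))
      _ = ENNReal.ofReal β := by rw [laplace_Iic_neg, htail]
  · have hL : log 2 < log (1 / β) :=
      log_lt_log two_pos (by rw [lt_div_iff₀ hβ0]; linarith)
    have hratio : 0 < log 2 / log (1 / β) :=
      div_pos (log_pos one_lt_two) ((log_pos one_lt_two).trans hL)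
    nlinarith [mul_pos hratio hα]
end

section
/- Let b > 0 and let Laplace(b) denote the Laplace distribution with scale b. Then for λ > 1, (1/(λ−1))·log[ (λ/(2λ−1))·exp((λ−1)/b) + ((λ−1)/(2λ−1))·exp(−λ/b) ] equals the Rényi divergence of order λ between Laplace(b) centered at 0 and Laplace(b) centered at 1. -/
open MeasureTheory Set Real

-- ∫ x in Ioi a, exp (-(r*x)) = r⁻¹ * exp (-(r*a))
lemma aux_int_exp_neg_mul_Ioi (a : ℝ) {r : ℝ} (hr : 0 < r) :
    ∫ x in Ioi a, Real.exp (-(r * x)) = r⁻¹ * Real.exp (-(r * a)) := by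
  have := integral_comp_mul_left_Ioi (fun y => Real.exp (-y)) a hr
  simp only [smul_eq_mul] at this
  rw [this, integral_exp_neg_Ioi]

lemma aux_integrableOn_exp_mul_Iic (c : ℝ) {r : ℝ} (hr : 0 < r) :
    IntegrableOn (fun x => Real.exp (r * x)) (Iic c) := by
  have h1 : IntegrableOn (fun x => Real.exp (-r * x)) (Ici (-c)) := by
    rw [integrableOn_Ici_iff_integrableOn_Ioi]
    exact exp_neg_integrableOn_Ioi (-c) hr
  have A : MeasurableEmbedding (fun x : ℝ => -x) :=
    (Homeomorph.neg ℝ).isClosedEmbedding.measurableEmbedding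
  have hmap : (volume : Measure ℝ).restrict (Ici (-c)) =
      ((volume : Measure ℝ).restrict (Iic c)).map (fun x : ℝ => -x) := by
    have hset : (fun x : ℝ => -x) ⁻¹' Ici (-c) = Iic c := by ext x; simp
    conv_lhs => rw [show (volume : Measure ℝ) = (volume : Measure ℝ).map (fun x : ℝ => -x) from
      (Measure.map_neg_eq_self _).symm]
    rw [Measure.restrict_map A.measurable measurableSet_Ici, hset]
  unfold IntegrableOn at h1 ⊢
  rw [hmap, A.integrable_map_iff] at h1
  convert h1 using 2
  · rfl
  simp [Function.comp]

lemma aux_int_exp_mul_Iic {r : ℝ} (hr : 0 < r) :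
    ∫ x in Iic (0:ℝ), Real.exp (r * x) = r⁻¹ := by
  have h0 : ∫ x in Iic (0:ℝ), Real.exp (r * x)
      = ∫ x in Iic (0:ℝ), (fun y => Real.exp (-(r * y))) (-x) := by
    congr 1 with x
    simp [mul_neg]
  have h1 := integral_comp_neg_Iic (0:ℝ) (fun y => Real.exp (-(r * y)))
  rw [h0, h1, neg_zero, aux_int_exp_neg_mul_Ioi 0 hr]
  simp

/-- The Rényi divergence of order `λ > 1` between `Laplace(b)` centered at 0 and
`Laplace(b)` centered at 1 equals
`(1/(λ−1))·log[(λ/(2λ−1))·e^{(λ−1)/b} + ((λ−1)/(2λ−1))·e^{−λ/b}]`. -/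
theorem renyi_divergence_laplace_shift (b lam : ℝ) (hb : 0 < b) (hlam : 1 < lam) :
    (1 / (lam - 1)) * Real.log (∫ x : ℝ,
        Real.rpow ((1 / (2 * b)) * Real.exp (-|x| / b)) lam *
          Real.rpow ((1 / (2 * b)) * Real.exp (-|x - 1| / b)) (1 - lam)) =
      (1 / (lam - 1)) * Real.log
        ((lam / (2 * lam - 1)) * Real.exp ((lam - 1) / b) +
          ((lam - 1) / (2 * lam - 1)) * Real.exp (-lam / b)) := by
  have hbne : b ≠ 0 := hb.ne'
  have h2b : (0:ℝ) < 1 / (2 * b) := by positivity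
  have hL : (0:ℝ) < 2 * lam - 1 := by linarith
  set F : ℝ → ℝ := fun x => Real.exp ((-lam * |x| + (lam - 1) * |x - 1|) / b) with hF
  -- Step A: rewrite the integrand
  have hA : ∀ x : ℝ,
      Real.rpow ((1 / (2 * b)) * Real.exp (-|x| / b)) lam *
        Real.rpow ((1 / (2 * b)) * Real.exp (-|x - 1| / b)) (1 - lam)
      = (1 / (2 * b)) * F x := by
    intro x
    simp only [show ∀ a c : ℝ, Real.rpow a c = a ^ c from fun _ _ => rfl]
    rw [Real.rpow_def_of_pos (by positivity), Real.rpow_def_of_pos (by positivity),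
      ← Real.exp_add, Real.log_mul (ne_of_gt h2b) (Real.exp_ne_zero _),
      Real.log_mul (ne_of_gt h2b) (Real.exp_ne_zero _), Real.log_exp, Real.log_exp]
    simp only [hF]
    have : (Real.log (1 / (2 * b)) + -|x| / b) * lam
        + (Real.log (1 / (2 * b)) + -|x - 1| / b) * (1 - lam)
        = Real.log (1 / (2 * b)) + (-lam * |x| + (lam - 1) * |x - 1|) / b := by
      field_simp
      ring
    rw [this, Real.exp_add, Real.exp_log h2b]
  -- pieces of F
  have hF_Iic : ∀ x ∈ Iic (0:ℝ), F x = Real.exp ((lam - 1) / b) * Real.exp (b⁻¹ * x) := by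
    intro x hx
    simp only [hF]
    rw [← Real.exp_add]
    congr 1
    rw [abs_of_nonpos hx, abs_of_nonpos (by simp at hx; linarith : x - 1 ≤ 0)]
    field_simp
    ring
  have hF_Ioc : ∀ x ∈ Ioc (0:ℝ) 1, F x = Real.exp ((-(2*lam-1)/b) * x + (lam-1)/b) := by
    intro x hx
    simp only [hF]
    congr 1
    rw [abs_of_pos hx.1, abs_of_nonpos (by linarith [hx.2] : x - 1 ≤ 0)]
    field_simp
    ring
  have hF_Ioi : ∀ x ∈ Ioi (1:ℝ), F x = Real.exp (-(lam-1)/b) * Real.exp (-(b⁻¹ * x)) := by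
    intro x hx
    simp only [hF]
    rw [← Real.exp_add]
    congr 1
    rw [abs_of_pos (by linarith [mem_Ioi.mp hx] : (0:ℝ) < x),
      abs_of_pos (by simp at hx; linarith : (0:ℝ) < x - 1)]
    field_simp
    ring
  have hbinv : (0:ℝ) < b⁻¹ := by positivity
  -- integrability
  have hInt1 : IntegrableOn F (Iic (0:ℝ)) := by
    apply (IntegrableOn.congr_fun _ (fun x hx => (hF_Iic x hx).symm) measurableSet_Iic)
    exact (aux_integrableOn_exp_mul_Iic 0 hbinv).const_mul _
  have hInt2 : IntegrableOn F (Ioc (0:ℝ) 1) := by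
    apply Continuous.integrableOn_Ioc
    fun_prop
  have hInt3 : IntegrableOn F (Ioi (1:ℝ)) := by
    apply (IntegrableOn.congr_fun _ (fun x hx => (hF_Ioi x hx).symm) measurableSet_Ioi)
    have := exp_neg_integrableOn_Ioi 1 hbinv
    exact ((this.congr_fun (fun x _ => by ring_nf) measurableSet_Ioi)).const_mul _
  have hInt23 : IntegrableOn F (Ioi (0:ℝ)) := by
    rw [← Ioc_union_Ioi_eq_Ioi (zero_le_one)]
    exact hInt2.union hInt3
  -- compute the three integrals
  set c1 := Real.exp ((lam - 1) / b) with hc1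
  set c2 := Real.exp (-lam / b) with hc2
  have hI1 : ∫ x in Iic (0:ℝ), F x = b * c1 := by
    rw [setIntegral_congr_fun measurableSet_Iic hF_Iic, integral_const_mul,
      aux_int_exp_mul_Iic hbinv, inv_inv]
    ring
  have hI3 : ∫ x in Ioi (1:ℝ), F x = b * c2 := by
    rw [setIntegral_congr_fun measurableSet_Ioi hF_Ioi, integral_const_mul,
      aux_int_exp_neg_mul_Ioi 1 hbinv, inv_inv]
    have key3 : Real.exp (-(lam - 1) / b) * Real.exp (-(b⁻¹ * 1)) = c2 := by
      rw [← Real.exp_add, hc2]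
      congr 1
      field_simp
      ring
    linear_combination b * key3
  have hI2 : ∫ x in Ioc (0:ℝ) 1, F x = b * (c1 - c2) / (2 * lam - 1) := by
    rw [setIntegral_congr_fun measurableSet_Ioc hF_Ioc]
    rw [← intervalIntegral.integral_of_le zero_le_one]
    have hq : (-(2*lam-1)/b) ≠ 0 := by
      apply div_ne_zero _ hbne
      linarith
    rw [_root_.intervalIntegral.integral_comp_mul_add Real.exp hq ((lam-1)/b)]
    rw [integral_exp]
    have e1 : -(2*lam-1)/b * 0 + (lam-1)/b = (lam-1)/b := by ring
    have e2 : -(2*lam-1)/b * 1 + (lam-1)/b = -lam/b := by field_simp; ring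
    rw [e1, e2, smul_eq_mul, ← hc1, ← hc2, inv_div, div_neg]
    ring
  -- assemble
  have hItot : ∫ x : ℝ, F x = b * c1 + (b * (c1 - c2) / (2 * lam - 1) + b * c2) := by
    rw [← intervalIntegral.integral_Iic_add_Ioi hInt1 hInt23, hI1]
    congr 1
    rw [← Ioc_union_Ioi_eq_Ioi (zero_le_one),
      setIntegral_union (Ioc_disjoint_Ioi le_rfl) measurableSet_Ioi hInt2 hInt3, hI2, hI3]
  have : (∫ x : ℝ,
      Real.rpow ((1 / (2 * b)) * Real.exp (-|x| / b)) lam *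
        Real.rpow ((1 / (2 * b)) * Real.exp (-|x - 1| / b)) (1 - lam))
      = (lam / (2 * lam - 1)) * c1 + ((lam - 1) / (2 * lam - 1)) * c2 := by
    have hfun : (fun x : ℝ =>
        Real.rpow ((1 / (2 * b)) * Real.exp (-|x| / b)) lam *
          Real.rpow ((1 / (2 * b)) * Real.exp (-|x - 1| / b)) (1 - lam))
        = fun x => (1 / (2 * b)) * F x := funext hA
    rw [hfun]
    rw [integral_const_mul, hItot]
    field_simp
    ring
  rw [this]
end

section
/- The Rényi divergence of order 1 (KL divergence) between Laplace(b) centered at 0 and Laplace(b) centered at 1 equals 1/b + exp(−1/b) − 1, for b > 0. -/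
/-!
The log-likelihood ratio of `Laplace(0, b)` against `Laplace(a, b)` is `(|x - a| - |x|) / b`,
which for `a ≥ 0` is constant on `(-∞, 0]` and on `[a, ∞)` and affine on `[0, a]`. So the
KL integral splits into two exponential tails and the integral of `exp (-x / b) * (a - 2 x)`
over `[0, a]`, which has the antiderivative `exp (-x / b) * (2 b x + 2 b² - a b)`.
Reflecting `x ↦ -x` reduces a negative shift to a positive one.
-/

open MeasureTheory Set Real

section
variable {a b : ℝ}

lemma laplace_kl_integrand_eq (hb : b ≠ 0) (x : ℝ) :
    (1 / (2 * b) * exp (-|x| / b)) *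
        log ((1 / (2 * b) * exp (-|x| / b)) / (1 / (2 * b) * exp (-|x - a| / b))) =
      exp (-|x| / b) * (|x - a| - |x|) / (2 * b ^ 2) := by
  rw [mul_div_mul_left _ _ (by positivity), ← exp_sub, log_exp]
  field_simp
  ring

lemma exp_neg_abs_mul_abs_sub_sub_abs_eqOn_Iic (ha : 0 ≤ a) :
    EqOn (fun x => exp (-|x| / b) * (|x - a| - |x|)) (fun x => a * exp (b⁻¹ * x)) (Iic 0) := by
  intro x (hx : x ≤ 0)
  simp only [abs_of_nonpos hx, abs_of_nonpos (by linarith : x - a ≤ 0)]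
  ring_nf

lemma exp_neg_abs_mul_abs_sub_sub_abs_eqOn_Icc :
    EqOn (fun x => exp (-|x| / b) * (|x - a| - |x|)) (fun x => exp (-x / b) * (a - 2 * x))
      (Icc 0 a) := by
  intro x ⟨hx0, hxa⟩
  simp only [abs_of_nonneg hx0, abs_of_nonpos (by linarith : x - a ≤ 0)]
  ring

lemma exp_neg_abs_mul_abs_sub_sub_abs_eqOn_Ioi (ha : 0 ≤ a) :
    EqOn (fun x => exp (-|x| / b) * (|x - a| - |x|)) (fun x => -a * exp (-b⁻¹ * x)) (Ioi a) := by
  intro x (hx : a < x)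
  simp only [abs_of_pos (by linarith : 0 < x), abs_of_pos (by linarith : 0 < x - a)]
  ring_nf

lemma hasDerivAt_exp_neg_div_mul_affine (hb : b ≠ 0) (x : ℝ) :
    HasDerivAt (fun x => exp (-x / b) * (2 * b * x + 2 * b ^ 2 - a * b))
      (exp (-x / b) * (a - 2 * x)) x := by
  have hexp : HasDerivAt (fun x => exp (-x / b)) (exp (-x / b) * (-1 / b)) x := by
    simpa using ((hasDerivAt_neg x).div_const b).exp
  have haffine : HasDerivAt (fun x => 2 * b * x + 2 * b ^ 2 - a * b) (2 * b) x := by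
    simpa using (((hasDerivAt_id x).const_mul (2 * b)).add_const (2 * b ^ 2)).sub_const (a * b)
  exact (hexp.mul haffine).congr_deriv (by field_simp; ring)

theorem integral_exp_neg_abs_div_mul_abs_sub_sub_abs_of_nonneg (ha : 0 ≤ a) (hb : 0 < b) :
    ∫ x, exp (-|x| / b) * (|x - a| - |x|) = 2 * b * (a + b * exp (-a / b) - b) := by
  set f : ℝ → ℝ := fun x => exp (-|x| / b) * (|x - a| - |x|)
  have hb_inv : 0 < b⁻¹ := inv_pos.2 hb
  have int_left : IntegrableOn f (Iic 0) :=
    IntegrableOn.congr_fun ((integrableOn_exp_mul_Iic hb_inv 0).const_mul a)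
      (exp_neg_abs_mul_abs_sub_sub_abs_eqOn_Iic ha).symm measurableSet_Iic
  have int_mid : IntegrableOn f (Ioc 0 a) := Continuous.integrableOn_Ioc (by fun_prop)
  have int_right : IntegrableOn f (Ioi a) :=
    IntegrableOn.congr_fun ((integrableOn_exp_mul_Ioi (neg_neg_iff_pos.2 hb_inv) a).const_mul (-a))
      (exp_neg_abs_mul_abs_sub_sub_abs_eqOn_Ioi ha).symm measurableSet_Ioi
  have int_Ioi : IntegrableOn f (Ioi 0) := by
    rw [← Ioc_union_Ioi_eq_Ioi ha]
    exact int_mid.union int_right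
  have left : ∫ x in Iic 0, f x = a * b := by
    rw [setIntegral_congr_fun measurableSet_Iic (exp_neg_abs_mul_abs_sub_sub_abs_eqOn_Iic ha),
      integral_const_mul, integral_exp_mul_Iic hb_inv]
    field_simp
    simp
  have mid : ∫ x in Ioc 0 a, f x = (a * b + 2 * b ^ 2) * exp (-a / b) - 2 * b ^ 2 + a * b := by
    have hEqOn : EqOn f (fun x => exp (-x / b) * (a - 2 * x)) (uIcc 0 a) := by
      simpa only [uIcc_of_le ha] using exp_neg_abs_mul_abs_sub_sub_abs_eqOn_Icc
    rw [← intervalIntegral.integral_of_le ha, intervalIntegral.integral_congr hEqOn,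
      intervalIntegral.integral_eq_sub_of_hasDerivAt
        (fun x _ => hasDerivAt_exp_neg_div_mul_affine hb.ne' x)
        (Continuous.intervalIntegrable (by fun_prop) 0 a)]
    simp
    ring
  have right : ∫ x in Ioi a, f x = -a * b * exp (-a / b) := by
    rw [setIntegral_congr_fun measurableSet_Ioi (exp_neg_abs_mul_abs_sub_sub_abs_eqOn_Ioi ha),
      integral_const_mul, integral_exp_mul_Ioi (neg_neg_iff_pos.2 hb_inv)]
    field_simp
  rw [← intervalIntegral.integral_Iic_add_Ioi int_left int_Ioi, ← Ioc_union_Ioi_eq_Ioi ha,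
    setIntegral_union (Ioc_disjoint_Ioi le_rfl) measurableSet_Ioi int_mid int_right,
    left, mid, right]
  ring

theorem integral_exp_neg_abs_div_mul_abs_sub_sub_abs (hb : 0 < b) (a : ℝ) :
    ∫ x, exp (-|x| / b) * (|x - a| - |x|) = 2 * b * (|a| + b * exp (-|a| / b) - b) := by
  rcases le_total 0 a with ha | ha
  · rw [abs_of_nonneg ha, integral_exp_neg_abs_div_mul_abs_sub_sub_abs_of_nonneg ha hb]
  · rw [abs_of_nonpos ha, ← integral_neg_eq_self,
      ← integral_exp_neg_abs_div_mul_abs_sub_sub_abs_of_nonneg (neg_nonneg.2 ha) hb]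
    congr 1 with x
    rw [abs_neg, ← abs_neg (-x - a)]
    ring_nf

theorem kl_integral_laplace_shift (hb : 0 < b) (a : ℝ) :
    ∫ x, (1 / (2 * b) * exp (-|x| / b)) *
        log ((1 / (2 * b) * exp (-|x| / b)) / (1 / (2 * b) * exp (-|x - a| / b))) =
      |a| / b + exp (-|a| / b) - 1 := by
  simp_rw [laplace_kl_integrand_eq hb.ne']
  rw [integral_div, integral_exp_neg_abs_div_mul_abs_sub_sub_abs hb]
  field_simp

end

/-- The KL divergence (Rényi divergence of order 1) between `Laplace(b)`
centered at 0 and `Laplace(b)` centered at 1 equals `1/b + e^{−1/b} − 1`. -/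
theorem kl_divergence_laplace_shift (b : ℝ) (hb : 0 < b) :
    (∫ x : ℝ, ((1 / (2 * b)) * Real.exp (-|x| / b)) *
        Real.log (((1 / (2 * b)) * Real.exp (-|x| / b)) /
          ((1 / (2 * b)) * Real.exp (-|x - 1| / b)))) =
      1 / b + Real.exp (-1 / b) - 1 := by
  simpa using kl_integral_laplace_shift hb 1
end

section
/- For b > 0, the log moment generating function bound μ_{Lap(b)}(λ) = (1/(λ−1))·log[ (λ/(2λ−1))·exp((λ−1)/b) + ((λ−1)/(2λ−1))·exp(−λ/b) ] satisfies μ_{Lap(b)}(λ) ≤ 1/b for all λ > 1, and μ_{Lap(b)}(λ) → 1/b as λ → ∞. -/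
/-!
Write `p = λ/(2λ−1) ∈ [1/2, 1]`, so the argument of the logarithm is the convex combination
`p·e^v + (1−p)·e^u` with `u = −λ/b ≤ v = (λ−1)/b`. It lies between `p·e^v ≥ e^v/2` and `e^v`, so
`μ(λ)` is squeezed between `1/b − log 2/(λ−1)` and `1/b`.
-/

open Real Filter

lemma log_convex_comb_exp_le {p u v : ℝ} (hp₀ : 0 ≤ p) (hp₁ : p ≤ 1) (huv : u ≤ v) :
    log (p * exp v + (1 - p) * exp u) ≤ v := by
  have hexp : exp u ≤ exp v := exp_le_exp.2 huv
  have hpos : 0 < p * exp v + (1 - p) * exp u := by nlinarith [exp_pos u]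
  rw [log_le_iff_le_exp hpos]
  nlinarith

lemma add_log_le_log_convex_comb_exp {p : ℝ} (u v : ℝ) (hp₀ : 0 < p) (hp₁ : p ≤ 1) :
    v + log p ≤ log (p * exp v + (1 - p) * exp u) := by
  rw [add_comm, ← log_exp v, ← log_mul hp₀.ne' (exp_pos _).ne', log_exp]
  exact log_le_log (by positivity) (le_add_of_nonneg_right (by nlinarith [exp_pos u]))

noncomputable def laplaceLogMoment (b lam : ℝ) : ℝ :=
  (1 / (lam - 1)) * log ((lam / (2 * lam - 1)) * exp ((lam - 1) / b) +
    ((lam - 1) / (2 * lam - 1)) * exp (-lam / b))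

section

variable {b lam : ℝ}

lemma laplaceLogMoment_eq (hlam : 2 * lam - 1 ≠ 0) :
    laplaceLogMoment b lam = (1 / (lam - 1)) * log ((lam / (2 * lam - 1)) * exp ((lam - 1) / b) +
      (1 - lam / (2 * lam - 1)) * exp (-lam / b)) := by
  rw [laplaceLogMoment, one_sub_div hlam]
  ring_nf

lemma half_le_div_two_mul_sub_one (hlam : 1 < lam) : 1 / 2 ≤ lam / (2 * lam - 1) := by
  rw [div_le_div_iff₀ two_pos (by linarith)]
  linarith

lemma div_two_mul_sub_one_le_one (hlam : 1 < lam) : lam / (2 * lam - 1) ≤ 1 := by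
  rw [div_le_one (by linarith)]
  linarith

lemma laplaceLogMoment_le (hb : 0 < b) (hlam : 1 < lam) : laplaceLogMoment b lam ≤ 1 / b := by
  have hlam₁ : 0 < lam - 1 := by linarith
  have hp₀ : 0 ≤ lam / (2 * lam - 1) :=
    (one_half_pos.trans_le (half_le_div_two_mul_sub_one hlam)).le
  have hlog := log_convex_comb_exp_le hp₀ (div_two_mul_sub_one_le_one hlam)
    (show -lam / b ≤ (lam - 1) / b by gcongr; linarith)
  rw [laplaceLogMoment_eq (by linarith)]
  calc (1 / (lam - 1)) * _ ≤ (1 / (lam - 1)) * ((lam - 1) / b) := by gcongr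
    _ = 1 / b := by field_simp

lemma sub_log_two_div_le_laplaceLogMoment (hb : 0 < b) (hlam : 1 < lam) :
    1 / b - log 2 / (lam - 1) ≤ laplaceLogMoment b lam := by
  have hlam₁ : 0 < lam - 1 := by linarith
  have hhalf := half_le_div_two_mul_sub_one hlam
  have hp₀ : 0 < lam / (2 * lam - 1) := one_half_pos.trans_le hhalf
  have hlog := add_log_le_log_convex_comb_exp (-lam / b) ((lam - 1) / b) hp₀
    (div_two_mul_sub_one_le_one hlam)
  have hlog_p : -log 2 ≤ log (lam / (2 * lam - 1)) := by
    rw [← log_inv, ← one_div]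
    exact log_le_log one_half_pos hhalf
  rw [laplaceLogMoment_eq (by linarith)]
  calc 1 / b - log 2 / (lam - 1) = (1 / (lam - 1)) * ((lam - 1) / b + -log 2) := by
        field_simp; ring
    _ ≤ (1 / (lam - 1)) * _ := by gcongr; linarith

end

/-- The log moment bound
`μ_{Lap(b)}(λ) = (1/(λ−1))·log[(λ/(2λ−1))·e^{(λ−1)/b} + ((λ−1)/(2λ−1))·e^{−λ/b}]`
is at most `1/b` for all `λ > 1`, and tends to `1/b` as `λ → ∞`. -/
theorem laplace_log_moment_bound (b : ℝ) (hb : 0 < b) :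
    (∀ lam : ℝ, 1 < lam →
      (1 / (lam - 1)) * Real.log
          ((lam / (2 * lam - 1)) * Real.exp ((lam - 1) / b) +
            ((lam - 1) / (2 * lam - 1)) * Real.exp (-lam / b)) ≤ 1 / b) ∧
    Filter.Tendsto (fun lam : ℝ =>
        (1 / (lam - 1)) * Real.log
          ((lam / (2 * lam - 1)) * Real.exp ((lam - 1) / b) +
            ((lam - 1) / (2 * lam - 1)) * Real.exp (-lam / b)))
      Filter.atTop (nhds (1 / b)) := by
  refine ⟨fun lam hlam => laplaceLogMoment_le hb hlam, ?_⟩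
  have hlower : Tendsto (fun lam : ℝ => 1 / b - log 2 / (lam - 1)) atTop (nhds (1 / b)) := by
    have hdecay := (tendsto_const_nhds (x := log 2)).div_atTop
      (tendsto_atTop_add_const_right atTop (-1) tendsto_id)
    simpa [sub_eq_add_neg] using (tendsto_const_nhds (x := 1 / b)).sub hdecay
  refine tendsto_of_tendsto_of_tendsto_of_le_of_le' hlower tendsto_const_nhds ?_ ?_
  · filter_upwards [eventually_gt_atTop 1] with lam hlam
    exact sub_log_two_div_le_laplaceLogMoment hb hlam
  · filter_upwards [eventually_gt_atTop 1] with lam hlam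
    exact laplaceLogMoment_le hb hlam
end

section
/- Let x₁,…,x_L and x'₁,…,x'_L be real vectors satisfying monotonicity (x_j ≥ x'_j for all j) and the Lipschitz property (x'_j + 1 ≥ x_j for all j). Add i.i.d. Laplace(k/ε) noise η_j to each coordinate and output the set of indices of the k largest noisy values. Then for any set S of k indices, the probability of outputting S under inputs (x_j) is at most exp(ε) times the probability of outputting S under inputs (x'_j), and vice versa. -/
open MeasureTheory

/-!
Translating the noise vector by `c` changes the product Laplace density by a factor of at most
`exp (∑ j, |c j| / b)`. If `S` is the top-`k` set of `x + ω`, adding `x i - x' i + δ` to the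
noise on `S` makes `S` the strict top-`k` set of `x' + ω + c`, so ties cannot move the selection;
symmetrically, adding `1 + δ` on `S` carries the event for `x'` into the event for `x`. Both
shifts have `ℓ¹`-norm at most `k (1 + δ)`, which at scale `k / ε` costs `exp (ε (1 + δ))`, and
`δ → 0` gives the bound `exp ε`.
-/

open Real
open scoped ENNReal NNReal

namespace MeasureTheory.Measure

section Pi

variable {ι : Type*} [Fintype ι] {α : ι → Type*} [∀ i, MeasurableSpace (α i)]

theorem pi_mono {μ ν : ∀ i, Measure (α i)} (h : ∀ i, μ i ≤ ν i) :
    Measure.pi μ ≤ Measure.pi ν := by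
  refine le_iff.2 fun s hs => ?_
  have hle : OuterMeasure.pi (fun i => (μ i).toOuterMeasure) ≤
      OuterMeasure.pi fun i => (ν i).toOuterMeasure :=
    OuterMeasure.le_boundedBy.2 fun t =>
      (OuterMeasure.boundedBy_le t).trans (Finset.prod_le_prod' fun i _ => h i _)
  simpa only [pi_def, toMeasure_apply _ _ hs] using hle s

theorem pi_smul (μ : ∀ i, Measure (α i)) [∀ i, SigmaFinite (μ i)] (c : ι → ℝ≥0) :
    Measure.pi (fun i => c i • μ i) = (∏ i, c i) • Measure.pi μ := by
  refine pi_eq fun s _ => ?_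
  simp only [pi_pi, coe_nnreal_smul_apply, ENNReal.ofNNReal_finsetProd, Finset.prod_mul_distrib]

theorem pi_map_add_le_smul {G : ι → Type*} [∀ i, AddGroup (G i)] [∀ i, MeasurableSpace (G i)]
    [∀ i, MeasurableAdd (G i)] (μ : ∀ i, Measure (G i)) [∀ i, SigmaFinite (μ i)]
    (c : ∀ i, G i) (C : ι → ℝ≥0) (h : ∀ i, (μ i).map (· + c i) ≤ C i • μ i) :
    (Measure.pi μ).map (· + c) ≤ (∏ i, C i) • Measure.pi μ := by
  have : ∀ i, SigmaFinite ((μ i).map (· + c i)) :=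
    fun i => (measurableEmbedding_addRight (c i)).sigmaFinite_map
  calc (Measure.pi μ).map (fun ω i => ω i + c i)
      = Measure.pi fun i => (μ i).map (· + c i) :=
        pi_map_pi fun i => (measurable_add_const (c i)).aemeasurable
    _ ≤ Measure.pi fun i => C i • μ i := pi_mono h
    _ = (∏ i, C i) • Measure.pi μ := pi_smul μ C

end Pi

theorem map_add_right_withDensity {G : Type*} [MeasurableSpace G] [AddGroup G] [MeasurableAdd G]
    (μ : Measure G) [μ.IsAddRightInvariant] (f : G → ℝ≥0∞) (t : G) :
    (μ.withDensity f).map (· + t) = μ.withDensity fun z => f (z - t) := by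
  ext s hs
  rw [map_apply (measurable_add_const t) hs, withDensity_apply _ (measurable_add_const t hs),
    withDensity_apply _ hs]
  simpa using (measurePreserving_add_right μ t).setLIntegral_comp_preimage_emb
    (measurableEmbedding_addRight t) (fun z => f (z - t)) s

end MeasureTheory.Measure

instance (b : ℝ) : SigmaFinite (laplace b) := by
  unfold laplace
  infer_instance

theorem laplace_density_sub_le {b : ℝ} (hb : 0 < b) (z t : ℝ) :
    1 / (2 * b) * exp (-|z - t| / b) ≤ exp (|t| / b) * (1 / (2 * b) * exp (-|z| / b)) := by
  have : -|z - t| / b ≤ |t| / b + -|z| / b := by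
    rw [← add_div, div_le_div_iff_of_pos_right hb]
    linarith [abs_sub_abs_le_abs_sub z t]
  calc 1 / (2 * b) * exp (-|z - t| / b) ≤ 1 / (2 * b) * exp (|t| / b + -|z| / b) := by gcongr
    _ = _ := by rw [exp_add]; ring

theorem laplace_map_add_le {b : ℝ} (hb : 0 < b) (t : ℝ) :
    (laplace b).map (· + t) ≤ (exp (|t| / b)).toNNReal • laplace b := by
  refine Measure.le_iff.2 fun s hs => ?_
  rw [laplace, Measure.map_add_right_withDensity, Measure.coe_nnreal_smul_apply,
    withDensity_apply _ hs, withDensity_apply _ hs, ← lintegral_const_mul' _ _ ENNReal.coe_ne_top]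
  refine lintegral_mono fun z => ?_
  rw [← ENNReal.ofReal.eq_def, ← ENNReal.ofReal_mul (exp_pos _).le]
  exact ENNReal.ofReal_le_ofReal (laplace_density_sub_le hb z t)

theorem pi_laplace_le_of_add_mem {ι : Type*} [Fintype ι] {b : ℝ} (hb : 0 < b) (c : ι → ℝ)
    {A B : Set (ι → ℝ)} (hAB : ∀ ω ∈ A, ω + c ∈ B) :
    Measure.pi (fun _ => laplace b) A ≤
      ENNReal.ofReal (exp ((∑ i, |c i|) / b)) * Measure.pi (fun _ => laplace b) B := by
  calc Measure.pi (fun _ => laplace b) A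
      ≤ Measure.pi (fun _ => laplace b) ((· + c) ⁻¹' B) := measure_mono hAB
    _ ≤ (Measure.pi fun _ => laplace b).map (· + c) B :=
        Measure.le_map_apply (measurable_add_const c).aemeasurable B
    _ ≤ ((∏ i, (exp (|c i| / b)).toNNReal) • Measure.pi fun _ => laplace b) B :=
        Measure.pi_map_add_le_smul _ c _ (fun i => laplace_map_add_le hb (c i)) B
    _ = _ := by
        rw [Measure.coe_nnreal_smul_apply,
          ← Real.toNNReal_prod_of_nonneg fun i _ => (exp_pos _).le, ← exp_sum, ← Finset.sum_div]
        rfl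

theorem ENNReal.le_ofReal_exp_mul_of_forall_gt {ε : ℝ} {m₁ m₂ : ℝ≥0∞}
    (h : ∀ r > ε, m₁ ≤ ENNReal.ofReal (exp r) * m₂) : m₁ ≤ ENNReal.ofReal (exp ε) * m₂ := by
  rcases eq_or_ne m₂ ⊤ with rfl | hm₂
  · simp [ENNReal.mul_top (ENNReal.ofReal_pos.2 (exp_pos ε)).ne']
  have hcont : Filter.Tendsto (fun r => ENNReal.ofReal (exp r) * m₂) (nhdsWithin ε (Set.Ioi ε))
      (nhds (ENNReal.ofReal (exp ε) * m₂)) :=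
    ENNReal.Tendsto.mul_const
      ((ENNReal.continuous_ofReal.comp Real.continuous_exp).continuousAt.tendsto.mono_left
        nhdsWithin_le_nhds) (Or.inr hm₂)
  exact ge_of_tendsto hcont (eventually_nhdsWithin_of_forall h)

structure IsTopKSelection {ι : Type*} (k : ℕ) (sel : (ι → ℝ) → Finset ι) : Prop where
  card_eq : ∀ y, (sel y).card = k
  le_of_mem_of_notMem : ∀ y, ∀ i ∈ sel y, ∀ j, j ∉ sel y → y j ≤ y i

namespace IsTopKSelection

variable {ι : Type*} {k : ℕ} {sel : (ι → ℝ) → Finset ι} {S : Finset ι}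

theorem eq_of_forall_lt (hsel : IsTopKSelection k sel) (hS : S.card = k) {y : ι → ℝ}
    (hy : ∀ i ∈ S, ∀ j ∉ S, y j < y i) : sel y = S := by
  by_contra hne
  have hcard : (sel y).card = S.card := by rw [hsel.card_eq, hS]
  obtain ⟨i, hiS, hiy⟩ := Finset.not_subset.1 fun h =>
    hne (Finset.eq_of_subset_of_card_le h hcard.le).symm
  obtain ⟨j, hjy, hjS⟩ := Finset.not_subset.1 fun h =>
    hne (Finset.eq_of_subset_of_card_le h hcard.ge)
  exact (hy i hiS j hjS).not_ge (hsel.le_of_mem_of_notMem y j hjy i hiy)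

theorem sel_add_eq (hsel : IsTopKSelection k sel) (hS : S.card = k) {u v c ω : ι → ℝ}
    (hω : sel (fun j => u j + ω j) = S)
    (hc : ∀ i ∈ S, ∀ j ∉ S, v j + c j - u j < v i + c i - u i) :
    sel (fun j => v j + (ω + c) j) = S := by
  refine hsel.eq_of_forall_lt hS fun i hi j hj => ?_
  have := hsel.le_of_mem_of_notMem _ i (hω ▸ hi) j (hω ▸ hj)
  simp only [Pi.add_apply] at this ⊢
  linarith [hc i hi j hj]

theorem pi_laplace_sel_eq_le [Fintype ι] (hsel : IsTopKSelection k sel) (hk : 1 ≤ k)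
    {ε : ℝ} (hε : 0 < ε) (hS : S.card = k) {u v a : ι → ℝ} (ha : ∀ i ∈ S, 0 ≤ a i ∧ a i ≤ 1)
    (hgap : ∀ i ∈ S, ∀ j ∉ S, v j - u j ≤ v i + a i - u i) :
    Measure.pi (fun _ => laplace ((k : ℝ) / ε)) {ω | sel (fun j => u j + ω j) = S} ≤
      ENNReal.ofReal (exp ε) *
        Measure.pi (fun _ => laplace ((k : ℝ) / ε)) {ω | sel (fun j => v j + ω j) = S} := by
  classical
  refine ENNReal.le_ofReal_exp_mul_of_forall_gt fun r hr => ?_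
  have hk₀ : (0 : ℝ) < k := by exact_mod_cast hk
  obtain ⟨δ, hδ, rfl⟩ : ∃ δ > 0, r = ε * (1 + δ) :=
    ⟨(r - ε) / ε, div_pos (sub_pos.2 hr) hε, by field_simp; ring⟩
  let c : ι → ℝ := fun j => if j ∈ S then a j + δ else 0
  have hsum : ∑ j, |c j| ≤ k * (1 + δ) := calc
    ∑ j, |c j| = ∑ j ∈ S, |a j + δ| := by
        rw [← Finset.sum_subset (Finset.subset_univ S) fun j _ hj => by simp [c, hj]]
        exact Finset.sum_congr rfl fun j hj => by simp [c, hj]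
    _ ≤ S.card • (1 + δ) := Finset.sum_le_card_nsmul _ _ _ fun j hj => by
        rw [abs_of_pos (by linarith [(ha j hj).1])]
        linarith [(ha j hj).2]
    _ = k * (1 + δ) := by rw [hS, nsmul_eq_mul]
  have hexp : (∑ j, |c j|) / (k / ε) ≤ ε * (1 + δ) := by
    rw [div_le_iff₀ (div_pos hk₀ hε)]
    calc ∑ j, |c j| ≤ k * (1 + δ) := hsum
      _ = ε * (1 + δ) * (k / ε) := by field_simp
  calc _ ≤ ENNReal.ofReal (exp ((∑ j, |c j|) / (k / ε))) * _ :=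
        pi_laplace_le_of_add_mem (div_pos hk₀ hε) c fun ω hω =>
          hsel.sel_add_eq hS hω fun i hi j hj => by
            show v j + c j - u j < v i + c i - u i
            simp only [c, if_pos hi, if_neg hj]
            linarith [hgap i hi j hj]
    _ ≤ _ := by gcongr

end IsTopKSelection

theorem noisy_topk_privacy_general (L k : ℕ) (hk : 1 ≤ k)
    (ε : ℝ) (hε : 0 < ε) (x x' : Fin L → ℝ)
    (hmono : ∀ j, x' j ≤ x j) (hlip : ∀ j, x j ≤ x' j + 1)
    (sel : (Fin L → ℝ) → Finset (Fin L))
    (hselcard : ∀ y, (sel y).card = k)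
    (hseltop : ∀ y, ∀ i ∈ sel y, ∀ j, j ∉ sel y → y j ≤ y i)
    (S : Finset (Fin L)) (hS : S.card = k) :
    (Measure.pi fun _ : Fin L => laplace ((k : ℝ) / ε))
        {ω | sel (fun j => x j + ω j) = S} ≤
      ENNReal.ofReal (Real.exp ε) *
        (Measure.pi fun _ : Fin L => laplace ((k : ℝ) / ε))
          {ω | sel (fun j => x' j + ω j) = S} ∧
    (Measure.pi fun _ : Fin L => laplace ((k : ℝ) / ε))
        {ω | sel (fun j => x' j + ω j) = S} ≤
      ENNReal.ofReal (Real.exp ε) *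
        (Measure.pi fun _ : Fin L => laplace ((k : ℝ) / ε))
          {ω | sel (fun j => x j + ω j) = S} := by
  have hsel : IsTopKSelection k sel := ⟨hselcard, hseltop⟩
  constructor
  · refine hsel.pi_laplace_sel_eq_le hk hε hS (a := x - x') (fun i _ => ?_) fun i _ j _ => ?_
    · simp only [Pi.sub_apply]
      constructor <;> linarith [hmono i, hlip i]
    · simp only [Pi.sub_apply]
      linarith [hmono j]
  · refine hsel.pi_laplace_sel_eq_le hk hε hS (a := 1) (fun i _ => ⟨zero_le_one, le_rfl⟩)
      fun i _ j _ => ?_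
    simp only [Pi.one_apply]
    linarith [hmono i, hlip j]

/-- Privacy of noisy top-k selection: for vectors `x, x'` satisfying
monotonicity (`x' ≤ x`) and the Lipschitz property (`x ≤ x' + 1`), addingi.i.d.
`Laplace(k/ε)` noise and outputting the k indices with the largest noisy values
changes the probability of any fixed k-subset by a factor of at most `e^ε`
in either direction. -/
theorem noisy_topk_privacy (L k : ℕ) (hk : 1 ≤ k) (hkL : k ≤ L)
    (ε : ℝ) (hε : 0 < ε) (x x' : Fin L → ℝ)
    (hmono : ∀ j, x' j ≤ x j) (hlip : ∀ j, x j ≤ x' j + 1)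
    (sel : (Fin L → ℝ) → Finset (Fin L))
    (hselcard : ∀ y, (sel y).card = k)
    (hseltop : ∀ y, ∀ i ∈ sel y, ∀ j, j ∉ sel y → y j ≤ y i)
    (S : Finset (Fin L)) (hS : S.card = k) :
    (Measure.pi fun _ : Fin L => laplace ((k : ℝ) / ε))
        {ω | sel (fun j => x j + ω j) = S} ≤
      ENNReal.ofReal (Real.exp ε) *
        (Measure.pi fun _ : Fin L => laplace ((k : ℝ) / ε))
          {ω | sel (fun j => x' j + ω j) = S} ∧
    (Measure.pi fun _ : Fin L => laplace ((k : ℝ) / ε))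
        {ω | sel (fun j => x' j + ω j) = S} ≤
      ENNReal.ofReal (Real.exp ε) *
        (Measure.pi fun _ : Fin L => laplace ((k : ℝ) / ε))
          {ω | sel (fun j => x j + ω j) = S} :=
  noisy_topk_privacy_general L k hk ε hε x x' hmono hlip sel hselcard hseltop S hS
end
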